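/- Let γ_N = [[A_N, C_N],[C_Nᵀ, A_N]] be a real symmetric matrix with A_N symmetric, C_N antisymmetric, and A_N − ‖C_N‖_op·I ≥ iJ. Then γ_N ≥ L_N ⊕ L_N where L_N := A_N − ‖C_N‖_op·I is a CM; consequently γ_N satisfies the separability condition (γ_N ≥ γ_A ⊕ γ_B for CMs γ_A, γ_B). -/

import Mathlib

/-
The off-diagonal block `C` couples the two halves only through `x ⬝ᵥ C *ᵥ y`, which is bounded
by `‖C‖_op ‖x‖ ‖y‖`. Hence `[[‖C‖_op I, C], [Cᵀ, ‖C‖_op I]]` has quadratic form at least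
`‖C‖_op (‖x‖ - ‖y‖)² ≥ 0`, and this matrix is exactly `γ_N - L_N ⊕ L_N`. Taking `γ_A = γ_B = L_N`
gives the separability condition.
-/

open Matrix
open scoped Classical ComplexOrder

noncomputable section

/-- Embed a real matrix into the complex matrices. -/
def toC {k l : ℕ} (A : Matrix (Fin k) (Fin l) ℝ) : Matrix (Fin k) (Fin l) ℂ :=
  A.map Complex.ofReal

/-- The standard symplectic form `Jₙ = ⊕ₖ [[0,-1],[1,0]]` on `ℝ^{2n}`. -/
def J (n : ℕ) : Matrix (Fin (2*n)) (Fin (2*n)) ℝ :=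
  Matrix.of fun i j =>
    if i.val + 1 = j.val ∧ i.val % 2 = 0 then -1
    else if j.val + 1 = i.val ∧ j.val % 2 = 0 then 1 else 0

/-- A correlation matrix (CM): a real symmetric `2n×2n` matrix with `γ - iJₙ ≥ 0`. -/
def IsCM {n : ℕ} (γ : Matrix (Fin (2*n)) (Fin (2*n)) ℝ) : Prop :=
  γ.IsSymm ∧ (toC γ - Complex.I • toC (J n)).PosSemidef

/-- The operator norm (largest singular value) of a real matrix. -/
def opNorm {n m : ℕ} (C : Matrix (Fin n) (Fin m) ℝ) : ℝ :=
  ‖(Matrix.toEuclideanLin (𝕜 := ℝ) C).toContinuousLinearMap‖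

/-- The square root of a positive semidefinite matrix, as `PosSemidef.sqrt` was defined in
Mathlib (Dec 2024). -/
def psdSqrt {k : ℕ} {𝕜 : Type*} [RCLike 𝕜] {A : Matrix (Fin k) (Fin k) 𝕜} (hA : A.PosSemidef) :
    Matrix (Fin k) (Fin k) 𝕜 :=
  hA.1.eigenvectorUnitary.1 * diagonal ((RCLike.ofReal : ℝ → 𝕜) ∘ Real.sqrt ∘ hA.1.eigenvalues) *
    (star hA.1.eigenvectorUnitary : Matrix (Fin k) (Fin k) 𝕜)

/-- The trace norm (sum of singular values) of a real square matrix. -/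
def trNorm {k : ℕ} (A : Matrix (Fin k) (Fin k) ℝ) : ℝ :=
  (psdSqrt (Matrix.posSemidef_conjTranspose_mul_self A)).trace

/-- The trace norm of a complex square matrix. -/
def trNormC {k : ℕ} (A : Matrix (Fin k) (Fin k) ℂ) : ℝ :=
  ((psdSqrt (Matrix.posSemidef_conjTranspose_mul_self A)).trace).re

/-- The Moore–Penrose pseudoinverse of a real matrix. -/
def pinvR {n m : ℕ} (A : Matrix (Fin n) (Fin m) ℝ) : Matrix (Fin m) (Fin n) ℝ :=
  if h : ∃ B : Matrix (Fin m) (Fin n) ℝ,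
      A * B * A = A ∧ B * A * B = B ∧ (A * B)ᵀ = A * B ∧ (B * A)ᵀ = B * A
  then h.choose else 0

/-- The Moore–Penrose pseudoinverse of a complex matrix. -/
def pinvC {n m : ℕ} (A : Matrix (Fin n) (Fin m) ℂ) : Matrix (Fin m) (Fin n) ℂ :=
  if h : ∃ B : Matrix (Fin m) (Fin n) ℂ,
      A * B * A = A ∧ B * A * B = B ∧ (A * B)ᴴ = A * B ∧ (B * A)ᴴ = B * A
  then h.choose else 0

/-- Real part of a complex matrix. -/
def reM {k l : ℕ} (X : Matrix (Fin k) (Fin l) ℂ) : Matrix (Fin k) (Fin l) ℝ :=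
  Matrix.of fun i j => (X i j).re

/-- Imaginary part of a complex matrix. -/
def imM {k l : ℕ} (X : Matrix (Fin k) (Fin l) ℂ) : Matrix (Fin k) (Fin l) ℝ :=
  Matrix.of fun i j => (X i j).im

open scoped InnerProductSpace

lemma dotProduct_self_eq_norm_toLp_sq {k : ℕ} (x : Fin k → ℝ) :
    x ⬝ᵥ x = ‖WithLp.toLp 2 x‖ ^ 2 := by
  rw [← real_inner_self_eq_norm_sq, EuclideanSpace.inner_toLp_toLp, star_trivial]

lemma abs_dotProduct_mulVec_le_opNorm {m k : ℕ} (C : Matrix (Fin m) (Fin k) ℝ)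
    (x : Fin m → ℝ) (y : Fin k → ℝ) :
    |x ⬝ᵥ C *ᵥ y| ≤ opNorm C * (‖WithLp.toLp 2 x‖ * ‖WithLp.toLp 2 y‖) := by
  have hinner : x ⬝ᵥ C *ᵥ y = ⟪WithLp.toLp 2 x, Matrix.toEuclideanLin C (WithLp.toLp 2 y)⟫_ℝ := by
    rw [dotProduct_comm]
    rfl
  calc |x ⬝ᵥ C *ᵥ y|
      ≤ ‖WithLp.toLp 2 x‖ * ‖Matrix.toEuclideanLin C (WithLp.toLp 2 y)‖ :=
        hinner ▸ abs_real_inner_le_norm _ _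
    _ ≤ ‖WithLp.toLp 2 x‖ * (opNorm C * ‖WithLp.toLp 2 y‖) :=
        mul_le_mul_of_nonneg_left
          ((Matrix.toEuclideanLin C).toContinuousLinearMap.le_opNorm _) (norm_nonneg _)
    _ = opNorm C * (‖WithLp.toLp 2 x‖ * ‖WithLp.toLp 2 y‖) := by ring

lemma posSemidef_fromBlocks_smul_one_of_opNorm_le {m k : ℕ} (C : Matrix (Fin m) (Fin k) ℝ)
    {c : ℝ} (hc : opNorm C ≤ c) : (fromBlocks (c • 1) C Cᵀ (c • 1)).PosSemidef := by
  refine PosSemidef.of_dotProduct_mulVec_nonneg ?_ fun x => ?_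
  · rw [IsHermitian, conjTranspose_eq_transpose_of_trivial, fromBlocks_transpose]
    simp only [transpose_smul, transpose_one, transpose_transpose]
  obtain ⟨x₁, x₂, rfl⟩ : ∃ x₁ x₂, x = Sum.elim x₁ x₂ := ⟨_, _, (Sum.elim_comp_inl_inr x).symm⟩
  have hform : star (Sum.elim x₁ x₂) ⬝ᵥ fromBlocks (c • 1) C Cᵀ (c • 1) *ᵥ Sum.elim x₁ x₂ =
      c * (x₁ ⬝ᵥ x₁) + 2 * (x₁ ⬝ᵥ C *ᵥ x₂) + c * (x₂ ⬝ᵥ x₂) := by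
    rw [star_trivial, fromBlocks_mulVec, sumElim_dotProduct_sumElim, Sum.elim_comp_inl,
      Sum.elim_comp_inr, dotProduct_add, dotProduct_add, dotProduct_mulVec x₂,
      vecMul_transpose, dotProduct_comm (C *ᵥ x₂)]
    simp only [smul_mulVec, one_mulVec, dotProduct_smul, smul_eq_mul]
    ring
  have hcross := neg_le_of_abs_le (abs_dotProduct_mulVec_le_opNorm C x₁ x₂)
  have hnorm : 0 ≤ opNorm C := norm_nonneg _
  rw [hform, dotProduct_self_eq_norm_toLp_sq, dotProduct_self_eq_norm_toLp_sq]
  nlinarith [mul_nonneg (hnorm.trans hc) (sq_nonneg (‖WithLp.toLp 2 x₁‖ - ‖WithLp.toLp 2 x₂‖)),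
    mul_nonneg (sub_nonneg.2 hc) (mul_nonneg (norm_nonneg (WithLp.toLp 2 x₁))
      (norm_nonneg (WithLp.toLp 2 x₂)))]

lemma fromBlocks_sub_fromBlocks_sub {l m α : Type*} [AddCommGroup α] (A : Matrix l l α)
    (B : Matrix l m α) (C : Matrix m l α) (D : Matrix m m α) (P : Matrix l l α)
    (Q : Matrix m m α) :
    fromBlocks A B C D - fromBlocks (A - P) 0 0 (D - Q) = fromBlocks P B C Q := by
  ext (i | i) (j | j) <;> simp

theorem LN_separable_general {n : ℕ} (A C : Matrix (Fin (2*n)) (Fin (2*n)) ℝ)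
    (hA : A.IsSymm)
    (hL : (toC (A - opNorm C • 1) - Complex.I • toC (J n)).PosSemidef) :
    IsCM (A - opNorm C • 1) ∧
    (Matrix.fromBlocks A C Cᵀ A -
      Matrix.fromBlocks (A - opNorm C • 1) 0 0 (A - opNorm C • 1)).PosSemidef ∧
    ∃ γA γB : Matrix (Fin (2*n)) (Fin (2*n)) ℝ, IsCM γA ∧ IsCM γB ∧
      (Matrix.fromBlocks A C Cᵀ A - Matrix.fromBlocks γA 0 0 γB).PosSemidef := by
  have hCM : IsCM (A - opNorm C • 1) := ⟨hA.sub (isSymm_one.smul _), hL⟩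
  have hgap : (fromBlocks A C Cᵀ A -
      fromBlocks (A - opNorm C • 1) 0 0 (A - opNorm C • 1)).PosSemidef := by
    rw [fromBlocks_sub_fromBlocks_sub]
    exact posSemidef_fromBlocks_smul_one_of_opNorm_le C le_rfl
  exact ⟨hCM, hgap, _, _, hCM, hCM, hgap⟩

/-- if `L_N = A_N − ‖C_N‖_op·I ≥ iJ`, then `γ_N ≥ L_N ⊕ L_N` with `L_N`
a CM; consequently `γ_N` satisfies the separability condition. -/
theorem LN_separable {n : ℕ} (A C : Matrix (Fin (2*n)) (Fin (2*n)) ℝ)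
    (hA : A.IsSymm) (hC : Cᵀ = -C)
    (hL : (toC (A - opNorm C • 1) - Complex.I • toC (J n)).PosSemidef) :
    IsCM (A - opNorm C • 1) ∧
    (Matrix.fromBlocks A C Cᵀ A -
      Matrix.fromBlocks (A - opNorm C • 1) 0 0 (A - opNorm C • 1)).PosSemidef ∧
    ∃ γA γB : Matrix (Fin (2*n)) (Fin (2*n)) ℝ, IsCM γA ∧ IsCM γB ∧
      (Matrix.fromBlocks A C Cᵀ A - Matrix.fromBlocks γA 0 0 γB).PosSemidef :=
  LN_separable_general A C hA hL
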